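/- arXiv:1502.06453 — 2 statements merged into one kernel-verified Lean document; each statement's English description precedes it below -/
import Mathlib

section
/- Fix θ ∈ [0,2π) with θ ≠ 0 and θ ≠ π, and set c = cos θ, s = sin θ. For every b ∈ (0, π) with cos b ≠ 0 and every x ∈ ℤ, (1/2π)·∫_{−π}^{π} e^{iax} / (2s²(1 − cos a · cos b) + (1−c)²·sin²b) da = (2s² + (1−c)²·sin²b − (1−c)·sin b·√((3+c)² − (1−c)²·cos²b))^{|x|} / ((1−c)·sin b·(2s²·cos b)^{|x|}·√((3+c)² − (1−c)²·cos²b)). -/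
/-!
Write the denominator as `A - B cos a` with `|B| < A`. With `s = √(A² - B²)` and
`t = (A - s) / B` (the root of `B t² - 2 A t + B` inside the unit disc) one has
`(1 - t²) (A - B cos a) = s (1 - 2 t cos a + t²)`, so the integrand is `e^{iax} / s` times the
Poisson kernel `(1 - t²) / (1 - 2 t cos a + t²) = ∑ₖ t^|k| e^{ika}`. Integrating term by term
leaves `2π t^|x| / s`, and finally
`A² - B² = ((1 - cos θ) sin b)² ((3 + cos θ)² - (1 - cos θ)² cos² b)`.
-/

open MeasureTheory Complex
open scoped Real

noncomputable def circlePoissonKernel (t a : ℝ) : ℝ :=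
  (1 - t ^ 2) / (1 - 2 * t * Real.cos a + t ^ 2)

theorem integral_exp_I_mul_mul_intCast (k : ℤ) :
    ∫ a in (-π)..π, exp (I * a * k) = if k = 0 then 2 * (π : ℂ) else 0 := by
  split_ifs with hk
  · simp [hk, two_mul]
  have hc : I * k ≠ 0 := mul_ne_zero I_ne_zero (Int.cast_ne_zero.2 hk)
  have hperiodic : exp (I * k * π) = exp (I * k * (-π : ℝ)) := by
    rw [← mul_one (exp (I * k * (-π : ℝ))), ← exp_int_mul_two_pi_mul_I k, ← exp_add]
    push_cast; ring_nf
  simp_rw [mul_right_comm I _ (k : ℂ)]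
  rw [integral_exp_mul_complex hc, hperiodic, sub_self, zero_div]

theorem hasSum_circlePoissonKernel {t : ℝ} (ht : |t| < 1) (a : ℝ) :
    HasSum (fun k : ℤ => (t : ℂ) ^ k.natAbs * exp (I * a * k)) (circlePoissonKernel t a) := by
  set z : ℂ := t * exp (I * a)
  set w : ℂ := t * exp (-(I * a))
  have hz : ‖z‖ < 1 := by simpa [z, norm_exp] using ht
  have hw : ‖w‖ < 1 := by simpa [w, norm_exp] using ht
  have hnonneg : HasSum (fun n : ℕ => (t : ℂ) ^ (n : ℤ).natAbs * exp (I * a * (n : ℤ)))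
      (1 - z)⁻¹ := by
    refine (hasSum_geometric_of_norm_lt_one hz).congr_fun fun n => ?_
    rw [Int.natAbs_natCast, mul_pow, ← Complex.exp_nat_mul]; push_cast; ring_nf
  have hneg : HasSum
      (fun n : ℕ => (t : ℂ) ^ (-(n + 1 : ℤ)).natAbs * exp (I * a * (-(n + 1 : ℤ) : ℤ)))
      (w * (1 - w)⁻¹) := by
    refine ((hasSum_geometric_of_norm_lt_one hw).mul_left w).congr_fun fun n => ?_
    rw [show (-(n + 1 : ℤ)).natAbs = n + 1 by omega, ← pow_succ', mul_pow,
      ← Complex.exp_nat_mul]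
    push_cast; ring_nf
  have hzw : z * w = (t : ℂ) ^ 2 := by
    rw [mul_mul_mul_comm, ← exp_add, add_neg_cancel, exp_zero, mul_one, sq]
  have hz_add_w : z + w = 2 * t * cos a := by
    rw [Complex.cos, neg_mul, mul_comm (a : ℂ) I]; ring
  have hz1 : 1 - z ≠ 0 := sub_ne_zero.2 fun h => by simp [← h] at hz
  have hw1 : 1 - w ≠ 0 := sub_ne_zero.2 fun h => by simp [← h] at hw
  clear_value z w
  have hsum : (1 - z)⁻¹ + w * (1 - w)⁻¹ = (1 - t ^ 2) / ((1 - z) * (1 - w)) := by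
    rw [eq_div_iff (mul_ne_zero hz1 hw1), add_mul, ← hzw]
    field_simp
    ring
  have hprod : (1 - z) * (1 - w) = ((1 - 2 * t * Real.cos a + t ^ 2 : ℝ) : ℂ) := by
    push_cast; linear_combination hzw - hz_add_w
  have key := HasSum.of_nat_of_neg_add_one
    (f := fun k : ℤ => (t : ℂ) ^ k.natAbs * exp (I * a * k)) hnonneg hneg
  rw [hsum, hprod] at key
  rw [circlePoissonKernel]
  exact_mod_cast key

theorem integral_exp_mul_circlePoissonKernel {t : ℝ} (ht : |t| < 1) (n : ℤ) :
    ∫ a in (-π)..π, exp (I * a * n) * circlePoissonKernel t a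
      = 2 * π * t ^ n.natAbs := by
  have hsummable : Summable fun k : ℤ => |t| ^ k.natAbs := by
    have hgeom := summable_geometric_of_lt_one (abs_nonneg t) ht
    refine .of_nat_of_neg_add_one (f := fun k : ℤ => |t| ^ k.natAbs)
      (hgeom.congr fun m => by simp) ((hgeom.mul_right |t|).congr fun m => ?_)
    rw [show (-(m + 1 : ℤ)).natAbs = m + 1 by omega, pow_succ]
  have hterm : ∀ k : ℤ,
      ∫ a in (-π)..π, exp (I * a * n) * ((t : ℂ) ^ k.natAbs * exp (I * a * k))
        = if k = -n then 2 * π * (t : ℂ) ^ n.natAbs else 0 := by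
    intro k
    simp_rw [mul_left_comm (exp _), ← exp_add, ← mul_add, ← Int.cast_add]
    rw [intervalIntegral.integral_const_mul, integral_exp_I_mul_mul_intCast]
    by_cases hk : k = -n
    · rw [if_pos hk, hk, Int.natAbs_neg, add_neg_cancel, if_pos rfl]
      ring
    · simp [hk, show n + k ≠ 0 by omega]
  have hsum := intervalIntegral.hasSum_integral_of_dominated_convergence
    (a := -π) (b := π) (μ := volume)
    (F := fun (k : ℤ) (a : ℝ) => exp (I * a * n) * ((t : ℂ) ^ k.natAbs * exp (I * a * k)))
    (fun k _ => |t| ^ k.natAbs) (fun k => by fun_prop)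
    (fun k => .of_forall fun a _ => by simp [norm_exp])
    (.of_forall fun _ _ => hsummable) intervalIntegrable_const
    (.of_forall fun a _ => (hasSum_circlePoissonKernel ht a).mul_left _)
  simp only [hterm] at hsum
  exact hsum.unique (hasSum_ite_eq _ _)

theorem integral_exp_div_sub_mul_cos {A B : ℝ} (hB : B ≠ 0) (hAB : |B| < A) (n : ℤ) :
    ∫ a in (-π)..π, exp (I * a * n) / ((A - B * Real.cos a : ℝ) : ℂ)
      = ((2 * π * ((A - √(A ^ 2 - B ^ 2)) / B) ^ n.natAbs
          / √(A ^ 2 - B ^ 2) : ℝ) : ℂ) := by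
  have hA : 0 < A := (abs_nonneg B).trans_lt hAB
  have hdisc : 0 < A ^ 2 - B ^ 2 := by nlinarith [sq_abs B, abs_nonneg B]
  set s := √(A ^ 2 - B ^ 2)
  have hs : 0 < s := Real.sqrt_pos.2 hdisc
  have hs2 : s ^ 2 = A ^ 2 - B ^ 2 := Real.sq_sqrt hdisc.le
  set t := (A - s) / B
  have htB : t * B = A - s := div_mul_cancel₀ _ hB
  clear_value s t
  have htAs : t * (A + s) = B := by
    apply mul_left_cancel₀ hB
    linear_combination (A + s) * htB - hs2
  have ht : |t| < 1 := by
    have : |t| * (A + s) = |B| := by rw [← htAs, abs_mul, abs_of_pos (by positivity : 0 < A + s)]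
    nlinarith [abs_nonneg t]
  have hfactor : ∀ a : ℝ,
      (1 - t ^ 2) * (A - B * Real.cos a) = s * (1 - 2 * t * Real.cos a + t ^ 2) := fun a => by
    linear_combination (t * Real.cos a - 1) * htB + (Real.cos a - t) * htAs
  have ht2 : 1 - t ^ 2 ≠ 0 := by nlinarith [sq_abs t, abs_nonneg t]
  have hpoint : ∀ a : ℝ, exp (I * a * n) / ((A - B * Real.cos a : ℝ) : ℂ)
      = (s : ℂ)⁻¹ * (exp (I * a * n) * circlePoissonKernel t a) := by
    intro a
    have hinv : (A - B * Real.cos a)⁻¹ = s⁻¹ * circlePoissonKernel t a := by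
      rw [circlePoissonKernel, inv_mul_eq_div, div_div, mul_comm _ s, ← hfactor a,
        div_mul_cancel_left₀ ht2]
    rw [div_eq_mul_inv, ← ofReal_inv, hinv, ofReal_mul, ofReal_inv]
    ring
  rw [intervalIntegral.integral_congr fun a _ => hpoint a, intervalIntegral.integral_const_mul,
    integral_exp_mul_circlePoissonKernel ht]
  push_cast
  ring

theorem Real.sin_ne_zero_of_mem_Ico {θ : ℝ} (hθ : θ ∈ Set.Ico 0 (2 * π)) (h0 : θ ≠ 0)
    (hπ : θ ≠ π) : Real.sin θ ≠ 0 := by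
  obtain ⟨hθ0, hθ2π⟩ := hθ
  rcases lt_or_ge θ π with hlt | hge
  · rw [Ne, Real.sin_eq_zero_iff_of_lt_of_lt (by linarith [Real.pi_pos]) hlt]
    exact h0
  · rw [← neg_ne_zero, ← Real.sin_sub_pi, Ne,
      Real.sin_eq_zero_iff_of_lt_of_lt (by linarith [Real.pi_pos]) (by linarith), sub_eq_zero]
    exact hπ

theorem sq_sub_sq_eq_mul_discriminant (θ b : ℝ) :
    (2 * Real.sin θ ^ 2 + (1 - Real.cos θ) ^ 2 * Real.sin b ^ 2) ^ 2
      - (2 * Real.sin θ ^ 2 * Real.cos b) ^ 2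
      = ((1 - Real.cos θ) * Real.sin b) ^ 2
        * ((3 + Real.cos θ) ^ 2 - (1 - Real.cos θ) ^ 2 * Real.cos b ^ 2) := by
  linear_combination (2 * Real.sin b ^ 2 * (2 * Real.sin θ ^ 2 + (1 - Real.cos θ) ^ 2
      + (1 - Real.cos θ) * (3 + Real.cos θ))) * Real.sin_sq_add_cos_sq θ
    + ((1 - Real.cos θ) ^ 4 * Real.sin b ^ 2 - 4 * Real.sin θ ^ 4) * Real.sin_sq_add_cos_sq b

theorem residue_integral_formula (θ : ℝ) (hθ : θ ∈ Set.Ico 0 (2 * Real.pi))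
    (hθ0 : θ ≠ 0) (hθpi : θ ≠ Real.pi) (b : ℝ) (hb : b ∈ Set.Ioo 0 Real.pi)
    (hcb : Real.cos b ≠ 0) (x : ℤ) :
    (1 / (2 * (Real.pi : ℂ))) *
      ∫ a in (-Real.pi)..Real.pi,
        Complex.exp (Complex.I * a * x) /
          ((2 * Real.sin θ ^ 2 * (1 - Real.cos a * Real.cos b)
            + (1 - Real.cos θ) ^ 2 * Real.sin b ^ 2 : ℝ) : ℂ)
    = (((2 * Real.sin θ ^ 2 + (1 - Real.cos θ) ^ 2 * Real.sin b ^ 2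
          - (1 - Real.cos θ) * Real.sin b *
            Real.sqrt ((3 + Real.cos θ) ^ 2 - (1 - Real.cos θ) ^ 2 * Real.cos b ^ 2)) ^ x.natAbs /
        ((1 - Real.cos θ) * Real.sin b * (2 * Real.sin θ ^ 2 * Real.cos b) ^ x.natAbs *
          Real.sqrt ((3 + Real.cos θ) ^ 2 - (1 - Real.cos θ) ^ 2 * Real.cos b ^ 2)) : ℝ) : ℂ) := by
  have hsθ := Real.sin_ne_zero_of_mem_Ico hθ hθ0 hθpi
  have hsb : 0 < Real.sin b := Real.sin_pos_of_pos_of_lt_pi hb.1 hb.2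
  have hcθ : Real.cos θ < 1 := (Real.cos_le_one θ).lt_of_ne fun h =>
    hsθ (Real.sin_eq_zero_iff_cos_eq.2 (Or.inl h))
  set A := 2 * Real.sin θ ^ 2 + (1 - Real.cos θ) ^ 2 * Real.sin b ^ 2
  set B := 2 * Real.sin θ ^ 2 * Real.cos b
  have hB : B ≠ 0 := by positivity
  have hAB : |B| < A := by
    have : |B| ≤ 2 * Real.sin θ ^ 2 := by
      rw [abs_mul, abs_of_pos (by positivity), mul_le_iff_le_one_right (by positivity)]
      exact Real.abs_cos_le_one b
    have : 0 < (1 - Real.cos θ) ^ 2 * Real.sin b ^ 2 := by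
      have : 0 < 1 - Real.cos θ := by linarith
      positivity
    linarith
  have hsqrt : √(A ^ 2 - B ^ 2) = (1 - Real.cos θ) * Real.sin b *
      √((3 + Real.cos θ) ^ 2 - (1 - Real.cos θ) ^ 2 * Real.cos b ^ 2) := by
    rw [sq_sub_sq_eq_mul_discriminant, Real.sqrt_mul (sq_nonneg _),
      Real.sqrt_sq (mul_nonneg (by linarith) hsb.le)]
  have hden : ∀ a : ℝ, 2 * Real.sin θ ^ 2 * (1 - Real.cos a * Real.cos b)
      + (1 - Real.cos θ) ^ 2 * Real.sin b ^ 2 = A - B * Real.cos a := fun a => by ring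
  simp_rw [hden, integral_exp_div_sub_mul_cos hB hAB, hsqrt]
  rw [show (1 : ℂ) / (2 * π) = ((1 / (2 * π) : ℝ) : ℂ) by push_cast; rfl, ← ofReal_mul,
    ofReal_inj, div_pow]
  field_simp
end

section
/- Fix θ ∈ [0,2π) with θ ≠ 0 and θ ≠ π, set c = cos θ, s = sin θ, A(θ) = arcsin((1−c)/(3+c)), and let α, β, γ ∈ ℂ with |α|² + |β|² + |γ|² = 1. Then the quantity L = |(1/2 − A(θ)/π)·α − (√2·s·A(θ)/(π(1−c)))·β + ((3+c)·A(θ)/(π(1−c)) − 1/2)·γ|² + |(√2·A(θ)/(π(1−c)))·(s·α − √2(1−c)·β + s·γ)|² + |((3+c)·A(θ)/(π(1−c)) − 1/2)·α − (√2·s·A(θ)/(π(1−c)))·β + (1/2 − A(θ)/π)·γ|² equals 0 if and only if γ = α, β = (√2(1+c)/s)·α, and |α| = √(1−c)/2. Consequently, delocalization at the origin for the 3-state hexagonal-lattice quantum walk (the limit of the return probability being 0) occurs if and only if the initial coin state satisfies these three conditions. -/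
set_option maxHeartbeats 2000000 in
theorem delocalization_condition (θ : ℝ) (hθ : θ ∈ Set.Ico 0 (2 * Real.pi))
    (hθ0 : θ ≠ 0) (hθpi : θ ≠ Real.pi) (α β γ : ℂ)
    (hnorm : ‖α‖ ^ 2 + ‖β‖ ^ 2 + ‖γ‖ ^ 2 = 1) :
    (‖((1 / 2 - Real.arcsin ((1 - Real.cos θ) / (3 + Real.cos θ)) / Real.pi : ℝ) : ℂ) * α
        - ((Real.sqrt 2 * Real.sin θ * Real.arcsin ((1 - Real.cos θ) / (3 + Real.cos θ)) /
            (Real.pi * (1 - Real.cos θ)) : ℝ) : ℂ) * β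
        + (((3 + Real.cos θ) * Real.arcsin ((1 - Real.cos θ) / (3 + Real.cos θ)) /
            (Real.pi * (1 - Real.cos θ)) - 1 / 2 : ℝ) : ℂ) * γ‖ ^ 2
      + ‖((Real.sqrt 2 * Real.arcsin ((1 - Real.cos θ) / (3 + Real.cos θ)) /
            (Real.pi * (1 - Real.cos θ)) : ℝ) : ℂ) *
          (((Real.sin θ : ℝ) : ℂ) * α
            - ((Real.sqrt 2 * (1 - Real.cos θ) : ℝ) : ℂ) * β
            + ((Real.sin θ : ℝ) : ℂ) * γ)‖ ^ 2
      + ‖(((3 + Real.cos θ) * Real.arcsin ((1 - Real.cos θ) / (3 + Real.cos θ)) /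
            (Real.pi * (1 - Real.cos θ)) - 1 / 2 : ℝ) : ℂ) * α
        - ((Real.sqrt 2 * Real.sin θ * Real.arcsin ((1 - Real.cos θ) / (3 + Real.cos θ)) /
            (Real.pi * (1 - Real.cos θ)) : ℝ) : ℂ) * β
        + ((1 / 2 - Real.arcsin ((1 - Real.cos θ) / (3 + Real.cos θ)) / Real.pi : ℝ) : ℂ) * γ‖ ^ 2
      = 0)
    ↔ (γ = α
        ∧ β = ((Real.sqrt 2 * (1 + Real.cos θ) / Real.sin θ : ℝ) : ℂ) * α
        ∧ ‖α‖ = Real.sqrt (1 - Real.cos θ) / 2) := by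
  have hπ := Real.pi_pos
  -- sin θ ≠ 0
  have hsne : Real.sin θ ≠ 0 := by
    obtain ⟨h1, h2⟩ := hθ
    intro h
    obtain ⟨n, hn⟩ := Real.sin_eq_zero_iff.mp h
    have hn0 : 0 ≤ n := by
      by_contra hneg
      push_neg at hneg
      have : (n : ℝ) ≤ -1 := by exact_mod_cast Int.le_of_lt_add_one (by omega : n < -1 + 1)
      nlinarith
    have hn2 : n < 2 := by
      by_contra hge
      push_neg at hge
      have : (2 : ℝ) ≤ (n : ℝ) := by exact_mod_cast hge
      nlinarith
    interval_cases n
    · simp at hn; exact hθ0 hn.symm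
    · simp at hn; exact hθpi hn.symm
  set c := Real.cos θ with hcdef
  set s := Real.sin θ with hsdef
  have hs2 : s ^ 2 = 1 - c ^ 2 := by
    rw [hsdef, hcdef]; nlinarith [Real.sin_sq_add_cos_sq θ]
  clear hsdef hcdef
  have hs2pos : 0 < s ^ 2 := lt_of_le_of_ne (sq_nonneg s) (Ne.symm (pow_ne_zero 2 hsne))
  have hc1 : -1 < c := by nlinarith [Real.neg_one_le_cos θ]
  have hc2 : c < 1 := by nlinarith [Real.cos_le_one θ]
  set A := Real.arcsin ((1 - c) / (3 + c)) with hAdef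
  have hx0 : 0 < (1 - c) / (3 + c) := div_pos (by linarith) (by linarith)
  have hx1 : (1 - c) / (3 + c) ≤ 1 := by
    rw [div_le_one (by linarith)]; linarith
  have hA0 : 0 < A := Real.arcsin_pos.mpr hx0
  have hA_le : A ≤ Real.pi / 2 * ((1 - c) / (3 + c)) := by
    have hmem : A ≤ Real.pi / 2 := Real.arcsin_le_pi_div_two _
    have hsinA : Real.sin A = (1 - c) / (3 + c) :=
      Real.sin_arcsin (by linarith) hx1
    have h3 := Real.mul_le_sin hA0.le hmem
    rw [hsinA] at h3
    have h4 := mul_le_mul_of_nonneg_left h3 (by positivity : (0:ℝ) ≤ Real.pi / 2)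
    calc A = Real.pi / 2 * (2 / Real.pi * A) := by field_simp
    _ ≤ _ := h4
  have hkey : A < Real.pi * (1 - c) / 4 := by
    have hlt : (1 - c) / (3 + c) < (1 - c) / 2 := by
      apply div_lt_div_of_pos_left (by linarith) (by norm_num) (by linarith)
    nlinarith
  have h2 : Real.sqrt 2 * Real.sqrt 2 = 2 := Real.mul_self_sqrt (by norm_num)
  set p : ℝ := 1 / 2 - A / Real.pi with hpdef
  set q : ℝ := Real.sqrt 2 * s * A / (Real.pi * (1 - c)) with hqdef
  set r : ℝ := (3 + c) * A / (Real.pi * (1 - c)) - 1 / 2 with hrdef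
  set k : ℝ := Real.sqrt 2 * A / (Real.pi * (1 - c)) with hkdef
  set u : ℝ := Real.sqrt 2 * (1 - c) with hudef
  set t : ℝ := Real.sqrt 2 * (1 + c) / s with htdef
  clear_value t u k r q p A s c
  have hcne : (1 : ℝ) - c ≠ 0 := by linarith
  have hπne : Real.pi ≠ 0 := hπ.ne'
  have hsq2 : Real.sqrt 2 ^ 2 = 2 := Real.sq_sqrt (by norm_num)
  have hprne : 0 < p - r := by
    have ha : (3 + c) * A / (Real.pi * (1 - c)) < (3 + c) / 4 := by
      rw [div_lt_div_iff₀ (mul_pos hπ (by linarith)) (by norm_num)]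
      nlinarith
    have hb : A / Real.pi < (1 - c) / 4 := by
      rw [div_lt_div_iff₀ hπ (by norm_num)]
      nlinarith
    rw [hpdef, hrdef]
    linarith
  have hkne : k ≠ 0 := by
    have : 0 < k := by
      rw [hkdef]
      exact div_pos (mul_pos (Real.sqrt_pos.mpr (by norm_num)) hA0)
        (mul_pos hπ (by linarith))
    exact this.ne'
  have hune : u ≠ 0 := by
    have : 0 < u := by
      rw [hudef]; exact mul_pos (Real.sqrt_pos.mpr (by norm_num)) (by linarith)
    exact this.ne'
  have id1 : p - q * t + r = 0 := by
    rw [hpdef, hqdef, hrdef, htdef]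
    field_simp
    ring_nf
    simp only [hsq2]
    ring
  have id2 : u * t = 2 * s := by
    rw [hudef, htdef]
    field_simp
    ring_nf
    simp only [hsq2]
    linear_combination (-2 : ℝ) * hs2
  have id3 : 2 + t ^ 2 = 4 / (1 - c) := by
    rw [htdef]
    field_simp
    ring_nf
    simp only [hsq2]
    linear_combination (-2 - 2 * c) * hs2
  constructor
  · intro h
    set V1 : ℂ := ((p : ℝ) : ℂ) * α - ((q : ℝ) : ℂ) * β + ((r : ℝ) : ℂ) * γ with hV1
    set V2 : ℂ := ((k : ℝ) : ℂ) * (((s : ℝ) : ℂ) * α - ((u : ℝ) : ℂ) * β + ((s : ℝ) : ℂ) * γ) with hV2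
    set V3 : ℂ := ((r : ℝ) : ℂ) * α - ((q : ℝ) : ℂ) * β + ((p : ℝ) : ℂ) * γ with hV3
    clear_value V1 V2 V3
    have hX : V1 = 0 := by
      have h0 : ‖V1‖ ^ 2 = 0 := by
        linarith [sq_nonneg ‖V1‖, sq_nonneg ‖V2‖, sq_nonneg ‖V3‖]
      exact norm_eq_zero.mp (pow_eq_zero_iff two_ne_zero |>.mp h0)
    have hY : V2 = 0 := by
      have h0 : ‖V2‖ ^ 2 = 0 := by
        linarith [sq_nonneg ‖V1‖, sq_nonneg ‖V2‖, sq_nonneg ‖V3‖]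
      exact norm_eq_zero.mp (pow_eq_zero_iff two_ne_zero |>.mp h0)
    have hZ : V3 = 0 := by
      have h0 : ‖V3‖ ^ 2 = 0 := by
        linarith [sq_nonneg ‖V1‖, sq_nonneg ‖V2‖, sq_nonneg ‖V3‖]
      exact norm_eq_zero.mp (pow_eq_zero_iff two_ne_zero |>.mp h0)
    rw [hV1] at hX
    rw [hV2] at hY
    rw [hV3] at hZ
    have hγα : γ = α := by
      have hd : ((p - r : ℝ) : ℂ) * (α - γ) = 0 := by
        push_cast
        linear_combination hX - hZ
      rcases mul_eq_zero.mp hd with hcase | hcase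
      · exact absurd hcase (Complex.ofReal_ne_zero.mpr hprne.ne')
      · exact (sub_eq_zero.mp hcase).symm
    have hβ : β = ((t : ℝ) : ℂ) * α := by
      have hY' : ((s : ℝ) : ℂ) * α - ((u : ℝ) : ℂ) * β + ((s : ℝ) : ℂ) * α = 0 := by
        have hY'' : ((s : ℝ) : ℂ) * α - ((u : ℝ) : ℂ) * β + ((s : ℝ) : ℂ) * γ = 0 := by
          rcases mul_eq_zero.mp hY with hcase | hcase
          · exact absurd hcase (Complex.ofReal_ne_zero.mpr hkne)
          · exact hcase
        rwa [hγα] at hY''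
      apply mul_left_cancel₀ (Complex.ofReal_ne_zero.mpr hune)
      have hut : ((u : ℝ) : ℂ) * ((t : ℝ) : ℂ) = ((2 * s : ℝ) : ℂ) := by
        exact_mod_cast congrArg (Complex.ofReal) id2
      push_cast at hut
      linear_combination -hY' - α * hut
    refine ⟨hγα, hβ, ?_⟩
    have hβn : ‖β‖ ^ 2 = t ^ 2 * ‖α‖ ^ 2 := by
      rw [hβ, norm_mul, Complex.norm_real, Real.norm_eq_abs, mul_pow, sq_abs]
    have hγn : ‖γ‖ ^ 2 = ‖α‖ ^ 2 := by rw [hγα]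
    rw [hβn, hγn] at hnorm
    have hαsq : ‖α‖ ^ 2 = (1 - c) / 4 := by
      have h4 : ‖α‖ ^ 2 * (4 / (1 - c)) = 1 := by
        rw [← id3]; linarith [hnorm]
      have hd : (4 / (1 - c)) * ((1 - c) / 4) = 1 := by field_simp
      calc ‖α‖ ^ 2 = ‖α‖ ^ 2 * ((4 / (1 - c)) * ((1 - c) / 4)) := by rw [hd, mul_one]
      _ = (‖α‖ ^ 2 * (4 / (1 - c))) * ((1 - c) / 4) := by ring
      _ = 1 * ((1 - c) / 4) := by rw [h4]
      _ = (1 - c) / 4 := one_mul _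
    rw [← Real.sqrt_sq (norm_nonneg α), hαsq]
    rw [show ((1 - c) / 4 : ℝ) = (1 - c) / 2 ^ 2 by norm_num]
    rw [Real.sqrt_div (by linarith : (0:ℝ) ≤ 1 - c)]
    rw [Real.sqrt_sq (by norm_num : (0:ℝ) ≤ 2)]
  · rintro ⟨hγ, hβ, -⟩
    rw [hγ, hβ]
    have hut : ((u : ℝ) : ℂ) * ((t : ℝ) : ℂ) = 2 * ((s : ℝ) : ℂ) := by
      exact_mod_cast congrArg (Complex.ofReal) id2
    have hid1 : ((p : ℝ) : ℂ) - ((q : ℝ) : ℂ) * ((t : ℝ) : ℂ) + ((r : ℝ) : ℂ) = 0 := by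
      exact_mod_cast congrArg (Complex.ofReal) id1
    have hv1 : ((p : ℝ) : ℂ) * α - ((q : ℝ) : ℂ) * (((t : ℝ) : ℂ) * α) + ((r : ℝ) : ℂ) * α = 0 := by
      linear_combination α * hid1
    have hv2 : ((k : ℝ) : ℂ) * (((s : ℝ) : ℂ) * α - ((u : ℝ) : ℂ) * (((t : ℝ) : ℂ) * α)
        + ((s : ℝ) : ℂ) * α) = 0 := by
      linear_combination -((k : ℝ) : ℂ) * α * hut
    have hv3 : ((r : ℝ) : ℂ) * α - ((q : ℝ) : ℂ) * (((t : ℝ) : ℂ) * α) + ((p : ℝ) : ℂ) * α = 0 := by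
      linear_combination α * hid1
    rw [hv1, hv2, hv3]
    simp
end
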